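/- arXiv:2101.01108 — 5 statements merged into one kernel-verified Lean document; each statement's English description precedes it below -/
import Mathlib

section
/- Let M be a matching and let C be a maximal chain of M (possibly an empty chain). Then the set (M ∖ C) ∪ Aug(C) is again a matching, i.e., it contains no two consecutive integers. -/
/-- A matching in the line graph with edges `e_1, …, e_s`: a subset of `{1, …, s}`
containing no two consecutive integers. -/
def IsMatching (s : ℕ) (M : Finset ℕ) : Prop :=
  M ⊆ Finset.Icc 1 s ∧ ∀ i ∈ M, i + 1 ∉ M

/-- The chain `{i, i+2, …, i+2(t-1)}` with `t` elements (empty when `t = 0`). -/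
def chainSet (i t : ℕ) : Finset ℕ :=
  (Finset.range t).image (fun j => i + 2 * j)

/-- The augmentation of the chain `chainSet i t`: for `t ≥ 1` it is
`{i-1, i+1, i+3, …, i+2(t-1)+1} ∩ {1, …, s}`; for the `i`-th empty chain (`t = 0`)
it is `{i}`. -/
def augSet (s i t : ℕ) : Finset ℕ :=
  if t = 0 then {i}
  else ((Finset.range (t + 1)).image (fun j => i - 1 + 2 * j)) ∩ Finset.Icc 1 s

/-- `chainSet i t` is a maximal chain of `M` (for `t = 0`, the `i`-th empty chain). -/
def IsMaximalChain (s : ℕ) (M : Finset ℕ) (i t : ℕ) : Prop :=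
  if t = 0 then
    i ∈ Finset.Icc 1 s ∧ (i - 1) ∉ M ∧ i ∉ M ∧ (i + 1) ∉ M
  else
    chainSet i t ⊆ M ∧ (i - 2) ∉ M ∧ (i + 2 * t) ∉ M

/-- If `C` is a maximal chain of a matching `M` (possibly an empty chain), then
`(M ∖ C) ∪ Aug(C)` is again a matching. -/
theorem stmt_1 (s : ℕ) (M : Finset ℕ) (hM : IsMatching s M) (i t : ℕ)
    (hC : IsMaximalChain s M i t) :
    IsMatching s ((M \ chainSet i t) ∪ augSet s i t) := by
  obtain ⟨hMs, hMc⟩ := hM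
  by_cases ht : t = 0
  · subst ht
    simp only [IsMaximalChain, if_pos rfl] at hC
    obtain ⟨hi, hi1, hi2, hi3⟩ := hC
    constructor
    · intro a ha
      simp only [Finset.mem_union, Finset.mem_sdiff, augSet, ↓reduceIte,
        Finset.mem_singleton] at ha
      rcases ha with ⟨haM, _⟩ | rfl
      · exact hMs haM
      · exact hi
    · intro a ha ha1
      simp only [Finset.mem_union, Finset.mem_sdiff, augSet, ↓reduceIte, chainSet,
        Finset.mem_singleton, Finset.range_zero, Finset.image_empty,
        Finset.notMem_empty, not_false_iff, and_true] at ha ha1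
      have hi1' : 1 ≤ i := (Finset.mem_Icc.mp hi).1
      rcases ha with haM | rfl
      · rcases ha1 with h1M | h1i
        · exact hMc a haM h1M
        · have h : a = i - 1 := by omega
          exact hi1 (h ▸ haM)
      · rcases ha1 with h1M | h1i
        · exact hi3 h1M
        · omega
  · simp only [IsMaximalChain, if_neg ht] at hC
    obtain ⟨hsub, hm2, hp⟩ := hC
    have ht1 : 1 ≤ t := Nat.one_le_iff_ne_zero.mpr ht
    have hchain : ∀ j, j < t → i + 2 * j ∈ M := by
      intro j hj
      apply hsub
      simp only [chainSet, Finset.mem_image, Finset.mem_range]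
      exact ⟨j, hj, rfl⟩
    have hiM : i ∈ M := by have := hchain 0 ht1; simpa using this
    have hi1 : 1 ≤ i := (Finset.mem_Icc.mp (hMs hiM)).1
    have hwin : ∀ a ∈ M, i ≤ a + 2 → a ≤ i + 2 * t → ∃ j < t, i + 2 * j = a := by
      intro a haM hlo hhi
      rcases Nat.even_or_odd (a + 2 - i) with ⟨m, hm⟩ | ⟨m, hm⟩
      · rcases Nat.eq_zero_or_pos m with rfl | hm0
        · exfalso
          have : a = i - 2 := by omega
          exact hm2 (this ▸ haM)
        · by_cases hmt : m - 1 = t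
          · exfalso
            have : a = i + 2 * t := by omega
            exact hp (this ▸ haM)
          · exact ⟨m - 1, by omega, by omega⟩
      · exfalso
        rcases Nat.eq_zero_or_pos m with rfl | hm0
        · have h : a + 1 = i := by omega
          exact hMc a haM (h ▸ hiM)
        · have hj : m - 1 < t := by omega
          have h2 := hMc _ (hchain (m - 1) hj)
          have h3 : i + 2 * (m - 1) + 1 = a := by omega
          exact h2 (h3 ▸ haM)
    constructor
    · intro a ha
      simp only [Finset.mem_union, Finset.mem_sdiff, augSet, if_neg ht,
        Finset.mem_inter] at ha
      rcases ha with ⟨haM, _⟩ | ⟨_, haI⟩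
      · exact hMs haM
      · exact haI
    · intro a ha ha1
      simp only [Finset.mem_union, Finset.mem_sdiff, augSet, if_neg ht,
        Finset.mem_inter, Finset.mem_image, Finset.mem_range, chainSet] at ha ha1
      rcases ha with ⟨haM, haC⟩ | ⟨⟨j, hj, hje⟩, haI⟩
      · rcases ha1 with ⟨h1M, _⟩ | ⟨⟨j, hj, hje⟩, h1I⟩
        · exact hMc a haM h1M
        · -- a + 1 = i - 1 + 2 * j, so a ∈ window
          have h1 : 1 ≤ a + 1 := (Finset.mem_Icc.mp h1I).1
          obtain ⟨j', hj', hje'⟩ := hwin a haM (by omega) (by omega)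
          exact haC ⟨j', hj', hje'⟩
      · rcases ha1 with ⟨h1M, h1C⟩ | ⟨⟨j', hj', hje'⟩, h1I⟩
        · have h1 : 1 ≤ a := (Finset.mem_Icc.mp haI).1
          obtain ⟨j'', hj'', hje''⟩ := hwin (a + 1) h1M (by omega) (by omega)
          exact h1C ⟨j'', hj'', hje''⟩
        · omega
end

section
/- Let M be a matching. Then the sets C ∪ Aug(C), as C ranges over all maximal chains of M (including all empty chains ∅_i of M), are pairwise disjoint and their union is all of {1, ..., s}. -/
lemma mem_chainSet {x i t : ℕ} : x ∈ chainSet i t ↔ ∃ j < t, i + 2 * j = x := by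
  simp [chainSet]

lemma mem_augSet_pos {s x i t : ℕ} (ht : t ≠ 0) :
    x ∈ augSet s i t ↔ (∃ j < t + 1, i - 1 + 2 * j = x) ∧ (1 ≤ x ∧ x ≤ s) := by
  simp [augSet, ht, Finset.mem_Icc]

lemma chain_subset {s : ℕ} {M : Finset ℕ} {i t : ℕ} (ht : t ≠ 0)
    (hc : IsMaximalChain s M i t) : chainSet i t ⊆ M := by
  rw [IsMaximalChain, if_neg ht] at hc; exact hc.1

lemma chains_eq {s : ℕ} {M : Finset ℕ} {i t i' t' m : ℕ}
    (ht : t ≠ 0) (ht' : t' ≠ 0)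
    (hc : IsMaximalChain s M i t) (hc' : IsMaximalChain s M i' t')
    (hm : m ∈ chainSet i t) (hm' : m ∈ chainSet i' t') : i = i' ∧ t = t' := by
  rw [IsMaximalChain, if_neg ht] at hc
  rw [IsMaximalChain, if_neg ht'] at hc'
  obtain ⟨j, hj, hje⟩ := mem_chainSet.1 hm
  obtain ⟨j', hj', hje'⟩ := mem_chainSet.1 hm'
  have hii : i = i' := by
    rcases lt_trichotomy i i' with h | h | h
    · exact absurd (hc.1 (mem_chainSet.2 ⟨j - j' - 1, by omega, by omega⟩)) hc'.2.1
    · exact h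
    · exact absurd (hc'.1 (mem_chainSet.2 ⟨j' - j - 1, by omega, by omega⟩)) hc.2.1
  subst hii
  refine ⟨rfl, ?_⟩
  rcases lt_trichotomy t t' with h | h | h
  · exact absurd (hc'.1 (mem_chainSet.2 ⟨t, h, rfl⟩)) hc.2.2
  · exact h
  · exact absurd (hc.1 (mem_chainSet.2 ⟨t', h, rfl⟩)) hc'.2.2

lemma anchor_mem {s : ℕ} {M : Finset ℕ} (hM : IsMatching s M) {i t x : ℕ} (ht : t ≠ 0)
    (hc : IsMaximalChain s M i t) (hx : x ∈ chainSet i t ∪ augSet s i t) :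
    (if x ∈ M then x else if x + 1 ∈ M then x + 1 else x - 1) ∈ chainSet i t := by
  rw [IsMaximalChain, if_neg ht] at hc
  have hiM : i ∈ M := hc.1 (mem_chainSet.2 ⟨0, Nat.pos_of_ne_zero ht, by ring⟩)
  have hi1 : 1 ≤ i := (Finset.mem_Icc.1 (hM.1 hiM)).1
  rw [Finset.mem_union] at hx
  rcases hx with hx | hx
  · rw [if_pos (hc.1 hx)]; exact hx
  · obtain ⟨⟨j, hj, hje⟩, hx1, hxs⟩ := (mem_augSet_pos ht).1 hx
    rcases Nat.eq_zero_or_pos j with rfl | hj0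
    · -- x = i - 1
      have hxM : x ∉ M := fun h => (hM.2 x h) (by rwa [show x + 1 = i by omega])
      rw [if_neg hxM, if_pos (by rwa [show x + 1 = i by omega])]
      exact mem_chainSet.2 ⟨0, by omega, by omega⟩
    · have hyc : i + 2 * (j - 1) ∈ chainSet i t := mem_chainSet.2 ⟨j - 1, by omega, rfl⟩
      have hyM : i + 2 * (j - 1) ∈ M := hc.1 hyc
      have hxM : x ∉ M := by
        have := hM.2 _ hyM
        rwa [show i + 2 * (j - 1) + 1 = x by omega] at this
      rw [if_neg hxM]
      by_cases hjt : j < t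
      · rw [if_pos (hc.1 (mem_chainSet.2 ⟨j, hjt, by omega⟩))]
        exact mem_chainSet.2 ⟨j, hjt, by omega⟩
      · have hx1M : x + 1 ∉ M := by
          rw [show x + 1 = i + 2 * t by omega]; exact hc.2.2
        rw [if_neg hx1M, show x - 1 = i + 2 * (j - 1) by omega]
        exact hyc

lemma chain_through {s : ℕ} {M : Finset ℕ} (hM : IsMatching s M) {m : ℕ} (hm : m ∈ M) :
    ∃ i d u, 1 ≤ i ∧ IsMaximalChain s M i (d + u + 1) ∧ i + 2 * d = m := by
  classical
  have hm1 : 1 ≤ m ∧ m ≤ s := Finset.mem_Icc.1 (hM.1 hm)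
  set P : ℕ → Prop := fun k => ∀ j ≤ k, m - 2 * j ∈ M with hP
  set Q : ℕ → Prop := fun k => ∀ j ≤ k, m + 2 * j ∈ M with hQ
  set d := Nat.findGreatest P m with hd
  set u := Nat.findGreatest Q s with hu
  have hP0 : P 0 := by rw [hP]; intro j hj; simpa [Nat.le_zero.1 hj] using hm
  have hQ0 : Q 0 := by rw [hQ]; intro j hj; simpa [Nat.le_zero.1 hj] using hm
  have hPd : P d := Nat.findGreatest_spec (Nat.zero_le m) hP0
  have hQu : Q u := Nat.findGreatest_spec (Nat.zero_le s) hQ0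
  rw [hP] at hPd; rw [hQ] at hQu
  have hPd1 : ¬ P (d + 1) := by
    intro h
    rw [hP] at h
    have h1 : m - 2 * (d + 1) ∈ M := h (d + 1) le_rfl
    have h2 : 1 ≤ m - 2 * (d + 1) := (Finset.mem_Icc.1 (hM.1 h1)).1
    exact Nat.findGreatest_is_greatest (Nat.lt_succ_self d) (by omega) (by rw [hP]; exact h)
  have hQu1 : ¬ Q (u + 1) := by
    intro h
    rw [hQ] at h
    have h1 : m + 2 * (u + 1) ∈ M := h (u + 1) le_rfl
    have h2 : m + 2 * (u + 1) ≤ s := (Finset.mem_Icc.1 (hM.1 h1)).2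
    exact Nat.findGreatest_is_greatest (Nat.lt_succ_self u) (by omega) (by rw [hQ]; exact h)
  have hdown : m - 2 * (d + 1) ∉ M := by
    intro h
    apply hPd1
    rw [hP]
    intro j hj
    rcases Nat.lt_or_ge j (d + 1) with h' | h'
    · exact hPd j (by omega)
    · rwa [show j = d + 1 by omega]
  have hup : m + 2 * (u + 1) ∉ M := by
    intro h
    apply hQu1
    rw [hQ]
    intro j hj
    rcases Nat.lt_or_ge j (u + 1) with h' | h'
    · exact hQu j (by omega)
    · rwa [show j = u + 1 by omega]
  have hiM : m - 2 * d ∈ M := hPd d le_rfl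
  have hi1 : 1 ≤ m - 2 * d := (Finset.mem_Icc.1 (hM.1 hiM)).1
  refine ⟨m - 2 * d, d, u, hi1, ?_, by omega⟩
  rw [IsMaximalChain, if_neg (by omega : d + u + 1 ≠ 0)]
  refine ⟨?_, ?_, ?_⟩
  · intro y hy
    obtain ⟨j, hj, hje⟩ := mem_chainSet.1 hy
    rcases Nat.lt_or_ge j (d + 1) with h' | h'
    · have := hPd (d - j) (by omega)
      rwa [show m - 2 * (d - j) = y by omega] at this
    · have := hQu (j - d) (by omega)
      rwa [show m + 2 * (j - d) = y by omega] at this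
  · rwa [show m - 2 * d - 2 = m - 2 * (d + 1) by omega]
  · rwa [show m - 2 * d + 2 * (d + u + 1) = m + 2 * (u + 1) by omega]

lemma zero_overlap {s : ℕ} {M : Finset ℕ} (hM : IsMatching s M) {i t i' x : ℕ}
    (ht : t ≠ 0) (hc : IsMaximalChain s M i t) (hc' : IsMaximalChain s M i' 0)
    (hx : x ∈ chainSet i t ∪ augSet s i t)
    (hx' : x ∈ chainSet i' 0 ∪ augSet s i' 0) : False := by
  rw [IsMaximalChain, if_pos rfl] at hc'
  have hxi : x = i' := by simpa [chainSet, augSet] using hx'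
  subst hxi
  have h := anchor_mem hM ht hc hx
  rw [if_neg hc'.2.2.1, if_neg hc'.2.2.2] at h
  exact hc'.2.1 (chain_subset ht hc h)

/-- The sets `C ∪ Aug(C)`, as `C` ranges over all maximal chains of a matching `M`
(including all empty chains of `M`), are pairwise disjoint and their union is all of
`{1, …, s}`. -/
theorem stmt_2 (s : ℕ) (M : Finset ℕ) (hM : IsMatching s M) :
    (∀ i t i' t', IsMaximalChain s M i t → IsMaximalChain s M i' t' → (i, t) ≠ (i', t') →
      Disjoint (chainSet i t ∪ augSet s i t) (chainSet i' t' ∪ augSet s i' t')) ∧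
    (∀ i t, IsMaximalChain s M i t → chainSet i t ∪ augSet s i t ⊆ Finset.Icc 1 s) ∧
    (∀ x ∈ Finset.Icc 1 s, ∃ i t, IsMaximalChain s M i t ∧
      x ∈ chainSet i t ∪ augSet s i t) := by
  refine ⟨?_, ?_, ?_⟩
  · intro i t i' t' hc hc' hne
    rw [Finset.disjoint_left]
    intro x hx hx'
    apply hne
    by_cases ht : t = 0
    · subst ht
      by_cases ht' : t' = 0
      · subst ht'
        have hxi : x = i := by
          rw [IsMaximalChain, if_pos rfl] at hc
          simpa [chainSet, augSet] using hx
        have hxi' : x = i' := by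
          rw [IsMaximalChain, if_pos rfl] at hc'
          simpa [chainSet, augSet] using hx'
        rw [← hxi, hxi']
      · exact absurd (zero_overlap hM ht' hc' hc hx' hx) (by simp)
    · by_cases ht' : t' = 0
      · subst ht'
        exact absurd (zero_overlap hM ht hc hc' hx hx') (by simp)
      · have h := anchor_mem hM ht hc hx
        have h' := anchor_mem hM ht' hc' hx'
        obtain ⟨hii, htt⟩ := chains_eq ht ht' hc hc' h h'
        rw [hii, htt]
  · intro i t hc
    by_cases ht : t = 0
    · subst ht
      rw [IsMaximalChain, if_pos rfl] at hc
      intro x hx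
      have hxi : x = i := by simpa [chainSet, augSet] using hx
      rw [hxi]; exact hc.1
    · rw [IsMaximalChain, if_neg ht] at hc
      intro x hx
      rw [Finset.mem_union] at hx
      rcases hx with hx | hx
      · exact hM.1 (hc.1 hx)
      · rw [augSet, if_neg ht] at hx
        exact (Finset.mem_inter.1 hx).2
  · intro x hx
    rw [Finset.mem_Icc] at hx
    by_cases h1 : x ∈ M
    · obtain ⟨i, d, u, hi1, hc, hid⟩ := chain_through hM h1
      exact ⟨i, d + u + 1, hc,
        Finset.mem_union_left _ (mem_chainSet.2 ⟨d, by omega, hid⟩)⟩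
    · by_cases h2 : x + 1 ∈ M
      · obtain ⟨i, d, u, hi1, hc, hid⟩ := chain_through hM h2
        refine ⟨i, d + u + 1, hc, Finset.mem_union_right _ ?_⟩
        rw [mem_augSet_pos (by omega)]
        exact ⟨⟨d, by omega, by omega⟩, hx.1, hx.2⟩
      · by_cases h3 : x - 1 ∈ M
        · obtain ⟨i, d, u, hi1, hc, hid⟩ := chain_through hM h3
          refine ⟨i, d + u + 1, hc, Finset.mem_union_right _ ?_⟩
          rw [mem_augSet_pos (by omega)]
          exact ⟨⟨d + 1, by omega, by omega⟩, hx.1, hx.2⟩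
        · refine ⟨x, 0, ?_, ?_⟩
          · rw [IsMaximalChain, if_pos rfl]
            exact ⟨Finset.mem_Icc.2 hx, h3, h1, h2⟩
          · apply Finset.mem_union_right
            simp [augSet]
end

section
/- Let M and M* be matchings with |M*| = |M| + 1. Then there exists a maximal chain C of M (possibly an empty chain) such that |M* ∩ (C ∪ Aug(C))| > |C|. -/
/-- The start of the maximal chain of `M` containing `m` (when `m ∈ M`). -/
def chainStart (M : Finset ℕ) : ℕ → ℕ
  | m => if 2 ≤ m ∧ m - 2 ∈ M then chainStart M (m - 2) else m
  termination_by m => m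
  decreasing_by omega

lemma chainStart_eq (M : Finset ℕ) (m : ℕ) :
    chainStart M m = if 2 ≤ m ∧ m - 2 ∈ M then chainStart M (m - 2) else m := by
  rw [chainStart]

lemma chainStart_spec (M : Finset ℕ) (m : ℕ) (hm : m ∈ M) :
    ∃ k, m = chainStart M m + 2 * k ∧ (∀ k' ≤ k, chainStart M m + 2 * k' ∈ M) ∧
      ¬(2 ≤ chainStart M m ∧ chainStart M m - 2 ∈ M) := by
  induction m using Nat.strong_induction_on with
  | _ m ih =>
    rw [chainStart_eq]
    by_cases h : 2 ≤ m ∧ m - 2 ∈ M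
    · rw [if_pos h]
      obtain ⟨k, hk1, hk2, hk3⟩ := ih (m - 2) (by omega) h.2
      refine ⟨k + 1, by omega, fun k' hk' => ?_, hk3⟩
      rcases Nat.lt_or_ge k' (k + 1) with h' | h'
      · exact hk2 k' (by omega)
      · have hx : chainStart M (m - 2) + 2 * k' = m := by omega
        rw [hx]; exact hm
    · rw [if_neg h]
      exact ⟨0, by omega, fun k' hk' => by
        have : k' = 0 := by omega
        simpa [this], h⟩

lemma chainStart_add (M : Finset ℕ) (i : ℕ) (hi : ¬(2 ≤ i ∧ i - 2 ∈ M)) :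
    ∀ k, (∀ k' < k, i + 2 * k' ∈ M) → chainStart M (i + 2 * k) = i := by
  intro k
  induction k with
  | zero =>
    intro _
    rw [chainStart_eq, if_neg (by simpa using hi)]
    omega
  | succ k ih =>
    intro hall
    rw [chainStart_eq, if_pos ⟨by omega, by
      have hx : i + 2 * (k + 1) - 2 = i + 2 * k := by omega
      rw [hx]; exact hall k (by omega)⟩]
    have hx : i + 2 * (k + 1) - 2 = i + 2 * k := by omega
    rw [hx]
    exact ih (fun k' hk' => hall k' (by omega))

lemma chainSet_card (i t : ℕ) : (chainSet i t).card = t := by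
  rw [chainSet, Finset.card_image_of_injective _ (fun a b h => by omega),
    Finset.card_range]

/-- If `M` and `M*` are matchings with `|M*| = |M| + 1`, then there is a maximal chain
`C` of `M` (possibly an empty chain) with `|M* ∩ (C ∪ Aug(C))| > |C|`. -/
theorem stmt_4 (s : ℕ) (M Mstar : Finset ℕ) (hM : IsMatching s M)
    (hMstar : IsMatching s Mstar) (hcard : Mstar.card = M.card + 1) :
    ∃ i t, IsMaximalChain s M i t ∧
      (chainSet i t).card < (Mstar ∩ (chainSet i t ∪ augSet s i t)).card := by
  by_contra hcon
  push_neg at hcon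
  have hMsub := hM.1
  have hMstarsub := hMstar.1
  have hzero : (0 : ℕ) ∉ M := fun h => by simpa using hMsub h
  -- every element of Mstar has an M-element within distance 1
  have hnear : ∀ j ∈ Mstar, j - 1 ∈ M ∨ j ∈ M ∨ j + 1 ∈ M := by
    intro j hj
    by_contra hno
    push_neg at hno
    have hmax : IsMaximalChain s M j 0 := by
      rw [IsMaximalChain, if_pos rfl]
      exact ⟨hMstarsub hj, hno.1, hno.2.1, hno.2.2⟩
    have hle := hcon j 0 hmax
    have h1 : chainSet j 0 = ∅ := by simp [chainSet]
    have h2 : augSet s j 0 = {j} := by simp [augSet]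
    rw [h1, h2] at hle
    simp only [Finset.empty_union, Finset.card_empty] at hle
    have : j ∈ Mstar ∩ ({j} : Finset ℕ) := by simp [hj]
    have := Finset.card_pos.mpr ⟨j, this⟩
    omega
  -- nearest M-element
  set nbr : ℕ → ℕ := fun j => if j ∈ M then j else if j + 1 ∈ M then j + 1 else j - 1
    with hnbr_def
  have hnbr : ∀ j ∈ Mstar, nbr j ∈ M := by
    intro j hj
    rcases hnear j hj with h | h | h <;> simp only [hnbr_def] <;>
      split_ifs <;> first | assumption | tauto
  -- the chain start assigned to j
  set g : ℕ → ℕ := fun j => chainStart M (nbr j) with hg_def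
  -- chain length from a start
  have hex : ∀ i : ℕ, ∃ t, i + 2 * t ∉ M := by
    intro i
    refine ⟨s + 1, fun hmem => ?_⟩
    have := hMsub hmem
    simp only [Finset.mem_Icc] at this
    omega
  set T : ℕ → ℕ := fun i => Nat.find (hex i) with hT_def
  have hTnot : ∀ i, i + 2 * T i ∉ M := fun i => Nat.find_spec (hex i)
  have hTmem : ∀ i, ∀ k < T i, i + 2 * k ∈ M := by
    intro i k hk
    have := Nat.find_min (hex i) hk
    simpa using this
  have hTpos : ∀ i ∈ M, 1 ≤ T i := by
    intro i hi
    by_contra h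
    have hT0 : T i = 0 := by omega
    have := hTnot i
    rw [hT0] at this
    simp only [Nat.mul_zero, Nat.add_zero] at this
    exact this hi
  -- facts about g j for j ∈ Mstar
  have hgspec : ∀ j ∈ Mstar, ∃ k, nbr j = g j + 2 * k ∧
      (∀ k' ≤ k, g j + 2 * k' ∈ M) ∧ ¬(2 ≤ g j ∧ g j - 2 ∈ M) := by
    intro j hj
    exact chainStart_spec M (nbr j) (hnbr j hj)
  have hgM : ∀ j ∈ Mstar, g j ∈ M := by
    intro j hj
    obtain ⟨k, hk1, hk2, hk3⟩ := hgspec j hj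
    simpa using hk2 0 (by omega)
  -- maximal chain from a start
  have hmaxchain : ∀ i ∈ M, ¬(2 ≤ i ∧ i - 2 ∈ M) → IsMaximalChain s M i (T i) := by
    intro i hi hstart
    have hT1 := hTpos i hi
    rw [IsMaximalChain, if_neg (by omega)]
    refine ⟨?_, ?_, hTnot i⟩
    · intro x hx
      simp only [chainSet, Finset.mem_image, Finset.mem_range] at hx
      obtain ⟨k, hk, rfl⟩ := hx
      exact hTmem i k hk
    · rcases Nat.lt_or_ge i 2 with h | h
      · have hi1 : 1 ≤ i := by
          have := hMsub hi; simp only [Finset.mem_Icc] at this; omega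
        have : i - 2 = 0 := by omega
        rw [this]; exact hzero
      · exact fun hmem => hstart ⟨h, hmem⟩
  -- j lies in the region of its assigned chain
  have hregion : ∀ j ∈ Mstar, j ∈ chainSet (g j) (T (g j)) ∪ augSet s (g j) (T (g j)) := by
    intro j hj
    obtain ⟨k, hk1, hk2, hk3⟩ := hgspec j hj
    have hgM' := hgM j hj
    have hg1 : 1 ≤ g j := by
      have := hMsub hgM'; simp only [Finset.mem_Icc] at this; omega
    have hkT : k < T (g j) := by
      by_contra h
      exact hTnot (g j) (hk2 (T (g j)) (by omega))
    have hT1 := hTpos (g j) hgM'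
    have hjIcc : j ∈ Finset.Icc 1 s := hMstarsub hj
    have haug : augSet s (g j) (T (g j)) =
        ((Finset.range (T (g j) + 1)).image (fun l => g j - 1 + 2 * l)) ∩ Finset.Icc 1 s := by
      rw [augSet, if_neg (by omega)]
    by_cases hjM : j ∈ M
    · -- nbr j = j
      have hnbrj : nbr j = j := by simp [hnbr_def, hjM]
      rw [hnbrj] at hk1
      apply Finset.mem_union_left
      simp only [chainSet, Finset.mem_image, Finset.mem_range]
      exact ⟨k, hkT, hk1.symm⟩
    · apply Finset.mem_union_right
      rw [haug, Finset.mem_inter]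
      refine ⟨?_, hjIcc⟩
      simp only [Finset.mem_image, Finset.mem_range]
      by_cases hj1 : j + 1 ∈ M
      · have hnbrj : nbr j = j + 1 := by simp [hnbr_def, hjM, hj1]
        rw [hnbrj] at hk1
        exact ⟨k, by omega, by omega⟩
      · have hjm1 : j - 1 ∈ M := by
          rcases hnear j hj with h | h | h <;> tauto
        have hnbrj : nbr j = j - 1 := by simp [hnbr_def, hjM, hj1]
        rw [hnbrj] at hk1
        have hj2 : 1 ≤ j - 1 := by
          have := hMsub hjm1; simp only [Finset.mem_Icc] at this; omega
        exact ⟨k + 1, by omega, by omega⟩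
  -- the set of chain starts used
  set S : Finset ℕ := Mstar.image g with hS_def
  have hSprop : ∀ i ∈ S, i ∈ M ∧ ¬(2 ≤ i ∧ i - 2 ∈ M) := by
    intro i hi
    rw [hS_def, Finset.mem_image] at hi
    obtain ⟨j, hj, rfl⟩ := hi
    obtain ⟨k, hk1, hk2, hk3⟩ := hgspec j hj
    exact ⟨hgM j hj, hk3⟩
  -- fiberwise counting
  have card_eq : Mstar.card = ∑ i ∈ S, (Mstar.filter (fun j => g j = i)).card :=
    Finset.card_eq_sum_card_fiberwise (fun j hj => Finset.mem_image_of_mem g hj)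
  have fiber_le : ∀ i ∈ S, (Mstar.filter (fun j => g j = i)).card ≤ T i := by
    intro i hi
    obtain ⟨hiM, histart⟩ := hSprop i hi
    have hmax := hmaxchain i hiM histart
    have hle := hcon i (T i) hmax
    rw [chainSet_card] at hle
    refine le_trans (Finset.card_le_card ?_) hle
    intro j hj
    rw [Finset.mem_filter] at hj
    obtain ⟨hjMs, hgj⟩ := hj
    rw [Finset.mem_inter]
    refine ⟨hjMs, ?_⟩
    have := hregion j hjMs
    rw [hgj] at this
    exact this
  have hMstar_le : Mstar.card ≤ ∑ i ∈ S, T i := by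
    rw [card_eq]
    exact Finset.sum_le_sum fiber_le
  -- the chains are pairwise disjoint subsets of M
  have hdisj : ∀ i ∈ S, ∀ i' ∈ S, i ≠ i' →
      Disjoint (chainSet i (T i)) (chainSet i' (T i')) := by
    intro i hi i' hi' hne
    rw [Finset.disjoint_left]
    intro x hx hx'
    obtain ⟨hiM, histart⟩ := hSprop i hi
    obtain ⟨hiM', histart'⟩ := hSprop i' hi'
    simp only [chainSet, Finset.mem_image, Finset.mem_range] at hx hx'
    obtain ⟨k, hk, rfl⟩ := hx
    obtain ⟨k', hk', hxx⟩ := hx'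
    have e1 : chainStart M (i + 2 * k) = i :=
      chainStart_add M i histart k (fun k'' hk'' => hTmem i k'' (by omega))
    have e2 : chainStart M (i' + 2 * k') = i' :=
      chainStart_add M i' histart' k' (fun k'' hk'' => hTmem i' k'' (by omega))
    rw [hxx] at e2
    exact hne (e1 ▸ e2 ▸ rfl)
  have hsum_eq : ∑ i ∈ S, T i = (S.biUnion (fun i => chainSet i (T i))).card := by
    rw [Finset.card_biUnion hdisj]
    exact Finset.sum_congr rfl (fun i _ => (chainSet_card i (T i)).symm)
  have hsub : S.biUnion (fun i => chainSet i (T i)) ⊆ M := by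
    intro x hx
    rw [Finset.mem_biUnion] at hx
    obtain ⟨i, hi, hx⟩ := hx
    obtain ⟨hiM, histart⟩ := hSprop i hi
    simp only [chainSet, Finset.mem_image, Finset.mem_range] at hx
    obtain ⟨k, hk, rfl⟩ := hx
    exact hTmem i k hk
  have : Mstar.card ≤ M.card := by
    calc Mstar.card ≤ ∑ i ∈ S, T i := hMstar_le
      _ = (S.biUnion (fun i => chainSet i (T i))).card := hsum_eq
      _ ≤ M.card := Finset.card_le_card hsub
  omega
end

section
/- Let w_1, ..., w_s be positive integer weights, and for 0 ≤ r ≤ ⌈s/2⌉ let f(r) denote the minimum of wt(M) over all matchings M with |M| = r. Then f is convex on its domain: for every r with 1 ≤ r ≤ ⌈s/2⌉ − 1, 2·f(r) ≤ f(r−1) + f(r+1). -/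
/-- The weight of a matching: the sum of the weights of its edges. -/
def wt (w : ℕ → ℕ) (M : Finset ℕ) : ℕ := ∑ i ∈ M, w i

lemma exchange (s : ℕ) (w : ℕ → ℕ) (A B : Finset ℕ)
    (hA : IsMatching s A) (hB : IsMatching s B) (hcard : B.card = A.card + 2) :
    ∃ A' B' : Finset ℕ, IsMatching s A' ∧ IsMatching s B' ∧
      A'.card = A.card + 1 ∧ B'.card = A.card + 1 ∧
      wt w A' + wt w B' = wt w A + wt w B := by
  classical
  set a : ℕ → ℕ := fun t => (A.filter (fun i => i ≤ t)).card with ha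
  set b : ℕ → ℕ := fun t => (B.filter (fun i => i ≤ t)).card with hb
  set d : ℕ → ℤ := fun t => (b t : ℤ) - a t with hd
  have hmem : ∀ X : Finset ℕ, X ⊆ Finset.Icc 1 s → ∀ i ∈ X, 1 ≤ i ∧ i ≤ s := by
    intro X hX i hi
    have := hX hi; simp [Finset.mem_Icc] at this; exact this
  have hfil0 : ∀ X : Finset ℕ, X ⊆ Finset.Icc 1 s → (X.filter (fun i => i ≤ 0)) = ∅ := by
    intro X hX
    apply Finset.filter_eq_empty_iff.mpr
    intro i hi hle
    have := hmem X hX i hi; omega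
  have hfils : ∀ X : Finset ℕ, X ⊆ Finset.Icc 1 s → (X.filter (fun i => i ≤ s)) = X := by
    intro X hX
    apply Finset.filter_eq_self.mpr
    intro i hi
    exact (hmem X hX i hi).2
  have hstep : ∀ (X : Finset ℕ) (t : ℕ),
      (X.filter (fun i => i ≤ t + 1)).card
        = (X.filter (fun i => i ≤ t)).card + (if t + 1 ∈ X then 1 else 0) := by
    intro X t
    by_cases h : t + 1 ∈ X
    · have heq : X.filter (fun i => i ≤ t + 1) = insert (t+1) (X.filter (fun i => i ≤ t)) := by
        ext i
        simp only [Finset.mem_filter, Finset.mem_insert]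
        constructor
        · rintro ⟨hi, hle⟩
          rcases Nat.eq_or_lt_of_le hle with h1 | h1
          · exact Or.inl h1
          · exact Or.inr ⟨hi, by omega⟩
        · rintro (rfl | ⟨hi, hle⟩)
          · exact ⟨h, le_refl _⟩
          · exact ⟨hi, by omega⟩
      rw [heq, Finset.card_insert_of_notMem (by simp), if_pos h]
    · have heq : X.filter (fun i => i ≤ t + 1) = X.filter (fun i => i ≤ t) := by
        ext i
        simp only [Finset.mem_filter]
        constructor
        · rintro ⟨hi, hle⟩
          refine ⟨hi, ?_⟩
          rcases Nat.eq_or_lt_of_le hle with h1 | h1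
          · exact absurd (h1 ▸ hi) h
          · omega
        · rintro ⟨hi, hle⟩; exact ⟨hi, by omega⟩
      rw [heq, if_neg h]; omega
  have hd0 : d 0 = 0 := by
    simp only [hd, ha, hb]
    rw [hfil0 A hA.1, hfil0 B hB.1]
    simp
  have hds : d s = 2 := by
    simp only [hd, ha, hb]
    rw [hfils A hA.1, hfils B hB.1, hcard]
    push_cast; ring
  have hdstep : ∀ t, d (t+1) = d t + (if t + 1 ∈ B then 1 else 0) - (if t + 1 ∈ A then 1 else 0) := by
    intro t
    simp only [hd, ha, hb]
    rw [hstep A t, hstep B t]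
    push_cast
    by_cases h1 : t + 1 ∈ B <;> by_cases h2 : t + 1 ∈ A <;> simp [h1, h2] <;> ring
  set S : Finset ℕ := (Finset.range (s+1)).filter (fun t => d t = 0) with hS
  have hSne : S.Nonempty := ⟨0, by simp [hS, hd0]⟩
  set t0 : ℕ := S.max' hSne with ht0
  have ht0mem : t0 ∈ S := S.max'_mem hSne
  have ht0max : ∀ x ∈ S, x ≤ t0 := fun x hx => S.le_max' x hx
  have ht0le : t0 ≤ s := by
    have := ht0mem; simp only [hS, Finset.mem_filter, Finset.mem_range] at this; omega
  have ht0d : d t0 = 0 := by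
    have := ht0mem; simp only [hS, Finset.mem_filter] at this; exact this.2
  have ht0lt : t0 < s := by
    rcases Nat.lt_or_ge t0 s with h | h
    · exact h
    · exfalso; have he : t0 = s := by omega
      rw [he] at ht0d; omega
  have hnotzero : ∀ u, t0 < u → u ≤ s → d u ≠ 0 := by
    intro u hu hus hdu
    have hmem' : u ∈ S := by
      simp only [hS, Finset.mem_filter, Finset.mem_range]
      exact ⟨by omega, hdu⟩
    have := ht0max u hmem'; omega
  have hd1 : d (t0 + 1) = 1 := by
    have h := hdstep t0
    have hne : d (t0 + 1) ≠ 0 := hnotzero (t0+1) (by omega) (by omega)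
    by_cases hcase : d (t0+1) = 1
    · exact hcase
    have hdtm : d (t0+1) = -1 := by
      by_cases h1 : t0 + 1 ∈ B <;> by_cases h2 : t0 + 1 ∈ A <;>
        simp only [h1, h2, if_true, if_false, ht0d] at h <;> omega
    exfalso
    set U : Finset ℕ := (Finset.Icc (t0+1) s).filter (fun u => 0 ≤ d u) with hU
    have hUne : U.Nonempty := ⟨s, by simp [hU, Finset.mem_Icc, hds]; omega⟩
    obtain ⟨u, humem, humin⟩ : ∃ u, u ∈ U ∧ ∀ x ∈ U, u ≤ x :=
      ⟨U.min' hUne, U.min'_mem hUne, fun x hx => U.min'_le x hx⟩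
    have hum : t0 + 1 ≤ u ∧ u ≤ s ∧ 0 ≤ d u := by
      have := humem; simp only [hU, Finset.mem_filter, Finset.mem_Icc] at this; tauto
    have hut : t0 + 1 < u := by
      rcases Nat.lt_or_ge (t0+1) u with h' | h'
      · exact h'
      · exfalso
        have he : u = t0 + 1 := by omega
        rw [he] at hum; omega
    obtain ⟨v, rfl⟩ : ∃ v, u = v + 1 := ⟨u - 1, by omega⟩
    have hvnot : ¬ (0 ≤ d v) := by
      intro hv
      have hv' : v ∈ U := by
        simp only [hU, Finset.mem_filter, Finset.mem_Icc]
        exact ⟨⟨by omega, by omega⟩, hv⟩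
      have := humin v hv'; omega
    have hstepv := hdstep v
    have hdu0 : d (v+1) = 0 := by
      have h1 := hum.2.2
      by_cases hb1 : v + 1 ∈ B <;> by_cases ha1 : v + 1 ∈ A <;>
        simp only [hb1, ha1, if_true, if_false] at hstepv <;> omega
    exact hnotzero (v+1) (by omega) hum.2.1 hdu0
  -- membership facts at t := t0 + 1
  have key : ∃ t, t ≤ s ∧ t ∈ B ∧ t ∉ A ∧ t + 1 ∉ B ∧ t + 1 ∉ A ∧ b t = a t + 1 := by
    refine ⟨t0 + 1, by omega, ?_, ?_, ?_, ?_, ?_⟩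
    · by_contra hc
      have h := hdstep t0
      rw [ht0d, if_neg hc] at h
      rw [hd1] at h
      by_cases h2 : t0 + 1 ∈ A <;> simp only [h2, if_true, if_false] at h <;> omega
    · intro hc
      have h := hdstep t0
      rw [ht0d, if_pos hc] at h
      rw [hd1] at h
      by_cases h2 : t0 + 1 ∈ B <;> simp only [h2, if_true, if_false] at h <;> omega
    · -- t+1 ∉ B
      intro hc
      have hBmem := (by
        by_contra hc'
        have h := hdstep t0
        rw [ht0d, if_neg hc'] at h
        rw [hd1] at h
        by_cases h2 : t0 + 1 ∈ A <;> simp only [h2, if_true, if_false] at h <;> omega : t0 + 1 ∈ B)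
      exact hB.2 _ hBmem hc
    · -- t+1 ∉ A
      intro hc
      have h1 : t0 + 1 + 1 ≤ s := (hmem A hA.1 _ hc).2
      have ht1B : t0 + 1 + 1 ∉ B := by
        intro hc'
        have hBmem := (by
          by_contra hc''
          have h := hdstep t0
          rw [ht0d, if_neg hc''] at h
          rw [hd1] at h
          by_cases h2 : t0 + 1 ∈ A <;> simp only [h2, if_true, if_false] at h <;> omega : t0 + 1 ∈ B)
        exact hB.2 _ hBmem hc'
      have h := hdstep (t0+1)
      rw [hd1, if_neg ht1B, if_pos hc] at h
      exact hnotzero (t0+1+1) (by omega) h1 (by omega)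
    · have := hd1
      simp only [hd] at this
      omega
  obtain ⟨t, hts, htB, htA, ht1B, ht1A, hbt⟩ := key
  -- define the swapped matchings
  set A' : Finset ℕ := A.filter (fun i => i ≤ t) ∪ B.filter (fun i => ¬ i ≤ t) with hA'
  set B' : Finset ℕ := B.filter (fun i => i ≤ t) ∪ A.filter (fun i => ¬ i ≤ t) with hB'
  have hdisj : ∀ X Y : Finset ℕ,
      Disjoint (X.filter (fun i => i ≤ t)) (Y.filter (fun i => ¬ i ≤ t)) := by
    intro X Y
    apply Finset.disjoint_left.mpr
    intro i hi hi'
    simp only [Finset.mem_filter] at hi hi'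
    omega
  have hsubA' : A' ⊆ Finset.Icc 1 s := by
    intro i hi
    simp only [hA', Finset.mem_union, Finset.mem_filter] at hi
    rcases hi with ⟨hi, _⟩ | ⟨hi, _⟩
    · exact hA.1 hi
    · exact hB.1 hi
  have hsubB' : B' ⊆ Finset.Icc 1 s := by
    intro i hi
    simp only [hB', Finset.mem_union, Finset.mem_filter] at hi
    rcases hi with ⟨hi, _⟩ | ⟨hi, _⟩
    · exact hB.1 hi
    · exact hA.1 hi
  have hmatchA' : IsMatching s A' := by
    refine ⟨hsubA', ?_⟩
    intro i hi hi1
    simp only [hA', Finset.mem_union, Finset.mem_filter] at hi hi1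
    rcases hi with ⟨hi, hle⟩ | ⟨hi, hle⟩ <;> rcases hi1 with ⟨hi1, hle1⟩ | ⟨hi1, hle1⟩
    · exact hA.2 i hi hi1
    · have he : i = t := by omega
      exact htA (he ▸ hi)
    · omega
    · exact hB.2 i hi hi1
  have hmatchB' : IsMatching s B' := by
    refine ⟨hsubB', ?_⟩
    intro i hi hi1
    simp only [hB', Finset.mem_union, Finset.mem_filter] at hi hi1
    rcases hi with ⟨hi, hle⟩ | ⟨hi, hle⟩ <;> rcases hi1 with ⟨hi1, hle1⟩ | ⟨hi1, hle1⟩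
    · exact hB.2 i hi hi1
    · have he : i = t := by omega
      exact ht1A (by rw [← he]; exact hi1)
    · omega
    · exact hA.2 i hi hi1
  have hsplit : ∀ X : Finset ℕ,
      (X.filter (fun i => i ≤ t)).card + (X.filter (fun i => ¬ i ≤ t)).card = X.card := by
    intro X
    exact Finset.card_filter_add_card_filter_not (fun i => i ≤ t)
  have hale : a t ≤ A.card := by
    simpa [ha] using Finset.card_filter_le A (fun i => i ≤ t)
  have hble : b t ≤ B.card := by
    simpa [hb] using Finset.card_filter_le B (fun i => i ≤ t)
  have hcardA' : A'.card = A.card + 1 := by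
    rw [hA', Finset.card_union_of_disjoint (hdisj A B)]
    have h1 := hsplit B
    have e1 : (A.filter (fun i => i ≤ t)).card = a t := rfl
    have e2 : (B.filter (fun i => i ≤ t)).card = b t := rfl
    omega
  have hcardB' : B'.card = A.card + 1 := by
    rw [hB', Finset.card_union_of_disjoint (hdisj B A)]
    have h1 := hsplit A
    have e1 : (B.filter (fun i => i ≤ t)).card = b t := rfl
    have e2 : (A.filter (fun i => i ≤ t)).card = a t := rfl
    omega
  have hwt : wt w A' + wt w B' = wt w A + wt w B := by
    rw [hA', hB', wt, wt, wt, wt, Finset.sum_union (hdisj A B), Finset.sum_union (hdisj B A)]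
    rw [show ∀ x1 x2 x3 x4 : ℕ, x1 + x2 + (x3 + x4) = (x1 + x4) + (x3 + x2) from
      fun _ _ _ _ => by ring]
    rw [Finset.sum_filter_add_sum_filter_not A, Finset.sum_filter_add_sum_filter_not B]
  exact ⟨A', B', hmatchA', hmatchB', hcardA', hcardB', hwt⟩


/-- Let `f r` be the minimum weight of a matching of cardinality `r` (for
`0 ≤ r ≤ ⌈s/2⌉`, with positive weights `w_1, …, w_s`). Then `f` is convex on its
domain: `2·f(r) ≤ f(r−1) + f(r+1)` for `1 ≤ r ≤ ⌈s/2⌉ − 1`. -/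
theorem stmt_10 (s : ℕ) (w : ℕ → ℕ) (hw : ∀ i, 1 ≤ i → i ≤ s → 0 < w i)
    (f : ℕ → ℕ)
    (hf : ∀ k, k ≤ (s + 1) / 2 →
      IsLeast {n : ℕ | ∃ M : Finset ℕ, IsMatching s M ∧ M.card = k ∧ wt w M = n} (f k))
    (r : ℕ) (h1 : 1 ≤ r) (h2 : r + 1 ≤ (s + 1) / 2) :
    2 * f r ≤ f (r - 1) + f (r + 1) := by
  obtain ⟨A, hAm, hAc, hAw⟩ := (hf (r-1) (by omega)).1
  obtain ⟨B, hBm, hBc, hBw⟩ := (hf (r+1) (by omega)).1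
  obtain ⟨A', B', hA'm, hB'm, hA'c, hB'c, hwt⟩ :=
    exchange s w A B hAm hBm (by omega)
  have hr : r ≤ (s+1)/2 := by omega
  have hle1 : f r ≤ wt w A' := (hf r hr).2 ⟨A', hA'm, by omega, rfl⟩
  have hle2 : f r ≤ wt w B' := (hf r hr).2 ⟨B', hB'm, by omega, rfl⟩
  omega
end

section
/- Let x and y be binary strings that each begin and end with the character 0. Let k and ℓ be the number of runs of x and y respectively (both of which are odd), suppose k ≥ ℓ, and let w_1, ..., w_k be the lengths of the runs of x in order. Then DTW(x, y) equals the minimum, over all subsets R ⊆ {2, 3, ..., k−1} with |R| = (k − ℓ)/2 that contain no two consecutive integers, of Σ_{i ∈ R} w_i. (For ℓ = k the empty minimum is 0 and DTW(x, y) = 0.) -/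
/-- `xb` is an expansion of the binary string `x`: it is obtained from `x` by
replacing each character of `x` with one or more consecutive copies of itself. -/
def IsExpansionOf (xb x : List (Fin 2)) : Prop :=
  ∃ m : ℕ → ℕ, (∀ i < x.length, 1 ≤ m i) ∧
    xb = ((List.range x.length).map (fun i => List.replicate (m i) (x.getD i 0))).flatten

/-- The value of a correspondence `(a, b)`: the sum of the distances
`d(a_i, b_i) = |a_i − b_i|` between corresponding characters (`0` if `a_i = b_i`,
and `1` otherwise). -/
def corrValue (a b : List (Fin 2)) : ℕ :=
  ((a.zip b).map (fun p => if p.1 = p.2 then 0 else 1)).sum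

/-- The dynamic time warping distance between binary strings `x` and `y`: the
minimum value of a correspondence, i.e. of a pair of equal-length expansions of
`x` and `y`. -/
noncomputable def DTW (x y : List (Fin 2)) : ℕ :=
  sInf {v : ℕ | ∃ xb yb : List (Fin 2), IsExpansionOf xb x ∧ IsExpansionOf yb y ∧
    xb.length = yb.length ∧ corrValue xb yb = v}

/-- The number of runs of a string: the number of maximal substrings consisting of
a single repeated character. -/
def numRuns (x : List (Fin 2)) : ℕ := (x.splitBy (· == ·)).length

/-- The lengths of the runs of a string, in left-to-right order. -/
def runLengths (x : List (Fin 2)) : List ℕ := (x.splitBy (· == ·)).map List.length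

/-!
Write both strings as alternating runs. An expansion only lengthens runs, so a correspondence is
a pair of run-length vectors dominating those of `x` and `y`, with equal sums.

Upper bound: flipping the runs in `R` merges each of them with its two neighbours, leaving as
many runs as `y` has; the two strings are then aligned run by run, and only the flipped runs are
paid for.

Lower bound: peel off the shorter of the two leading runs and induct. A run of `x` lying entirely
against runs of `y` of the other character is paid in full; these runs form the set `R`, and
each of them lets `x` have two more runs than `y`. Since both strings end with the same
character, the parity of the run counts absorbs the off-by-one cases.
-/

lemma Fin.two_add_one_add_one (c : Fin 2) : c + 1 + 1 = c := by revert c; decide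

lemma Fin.two_add_one_ne (c : Fin 2) : c + 1 ≠ c := by revert c; decide

lemma Fin.two_add_one_eq_iff_ne (c d : Fin 2) : c + 1 = d ↔ c ≠ d := by revert c d; decide

def runGroups : List ℕ → Fin 2 → List (List (Fin 2))
  | [], _ => []
  | a :: w, c => List.replicate a c :: runGroups w (c + 1)

@[simp] lemma runGroups_nil (c : Fin 2) : runGroups [] c = [] := rfl

@[simp] lemma runGroups_cons (a : ℕ) (w : List ℕ) (c : Fin 2) :
    runGroups (a :: w) c = List.replicate a c :: runGroups w (c + 1) := rfl

/-- Zero entries of `w` are allowed, so `w` is the run-length vector of `ofRunLengths w c` only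
when `0 ∉ w`. -/
def ofRunLengths (w : List ℕ) (c : Fin 2) : List (Fin 2) := (runGroups w c).flatten

@[simp] lemma ofRunLengths_nil (c : Fin 2) : ofRunLengths [] c = [] := rfl

@[simp] lemma ofRunLengths_cons (a : ℕ) (w : List ℕ) (c : Fin 2) :
    ofRunLengths (a :: w) c = List.replicate a c ++ ofRunLengths w (c + 1) := rfl

@[simp] lemma length_ofRunLengths (w : List ℕ) (c : Fin 2) :
    (ofRunLengths w c).length = w.sum := by
  induction w generalizing c with
  | nil => rfl
  | cons a w ih => simp [ih]

lemma splitBy_ofRunLengths {w : List ℕ} (hw : 0 ∉ w) (c : Fin 2) :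
    (ofRunLengths w c).splitBy (· == ·) = runGroups w c := by
  refine List.splitBy_flatten ?_ ?_ ?_
  · induction w generalizing c with
    | nil => simp
    | cons a w ih =>
      simp only [List.mem_cons, not_or] at hw
      simpa [Ne.symm hw.1] using ih hw.2 (c + 1)
  · induction w generalizing c with
    | nil => simp
    | cons a w ih =>
      simp only [List.mem_cons, not_or] at hw
      simpa [List.isChain_replicate_of_rel] using ih hw.2 (c + 1)
  · induction w generalizing c with
    | nil => simp
    | cons a w ih =>
      simp only [List.mem_cons, not_or] at hw
      cases w with
      | nil => simp
      | cons b w =>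
        refine List.IsChain.cons_cons ?_ (ih hw.2 (c + 1))
        simp only [List.mem_cons, not_or] at hw
        simp [List.getLast_replicate, List.head_replicate, Ne.symm hw.1, Ne.symm hw.2.1]

lemma runLengths_ofRunLengths {w : List ℕ} (hw : 0 ∉ w) (c : Fin 2) :
    runLengths (ofRunLengths w c) = w := by
  rw [runLengths, splitBy_ofRunLengths hw]
  induction w generalizing c with
  | nil => rfl
  | cons a w ih =>
    simp only [List.mem_cons, not_or] at hw
    simp [ih hw.2]

lemma numRuns_ofRunLengths {w : List ℕ} (hw : 0 ∉ w) (c : Fin 2) :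
    numRuns (ofRunLengths w c) = w.length := by
  rw [numRuns, ← List.length_map, ← runLengths, runLengths_ofRunLengths hw]

lemma exists_ofRunLengths_cons (c : Fin 2) (x : List (Fin 2)) :
    ∃ w : List ℕ, 0 ∉ w ∧ c :: x = ofRunLengths w c := by
  induction x generalizing c with
  | nil => exact ⟨[1], by simp, by simp⟩
  | cons e x ih =>
    obtain ⟨_ | ⟨a, w⟩, hw, hx⟩ := ih e
    · simp at hx
    by_cases hc : c = e
    · subst hc
      refine ⟨(a + 1) :: w, by simp_all, ?_⟩
      rw [hx, ofRunLengths_cons, ofRunLengths_cons, List.replicate_succ, List.cons_append]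
    · refine ⟨1 :: a :: w, by simp_all, ?_⟩
      rw [hx, ofRunLengths_cons 1, (Fin.two_add_one_eq_iff_ne c e).2 hc]
      rfl

lemma getLast?_ofRunLengths {w : List ℕ} (hw : 0 ∉ w) (hne : w ≠ []) (c : Fin 2) :
    (ofRunLengths w c).getLast? = some (if w.length % 2 = 1 then c else c + 1) := by
  induction w generalizing c with
  | nil => contradiction
  | cons a w ih =>
    simp only [List.mem_cons, not_or] at hw
    rcases eq_or_ne w [] with rfl | hw'
    · simp [List.getLast?_replicate, Ne.symm hw.1]
    · rw [ofRunLengths_cons, List.getLast?_append, ih hw.2 hw']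
      simp only [Option.some_or, List.length_cons, Fin.two_add_one_add_one]
      split_ifs <;> first | rfl | omega

@[simp] lemma isExpansionOf_nil_iff {xb : List (Fin 2)} : IsExpansionOf xb [] ↔ xb = [] := by
  simp [IsExpansionOf]

lemma isExpansionOf_cons_iff {xb x : List (Fin 2)} {c : Fin 2} :
    IsExpansionOf xb (c :: x) ↔
      ∃ n xb', 1 ≤ n ∧ xb = List.replicate n c ++ xb' ∧ IsExpansionOf xb' x := by
  simp only [IsExpansionOf, List.length_cons, List.range_succ_eq_map, List.map_cons,
    List.map_map, List.flatten_cons, List.getD_cons_zero]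
  constructor
  · rintro ⟨m, hm, rfl⟩
    exact ⟨m 0, _, hm 0 (by omega), rfl, m ∘ Nat.succ,
      fun i hi => hm (i + 1) (by omega), by simp [Function.comp_def]⟩
  · rintro ⟨n, xb', hn, rfl, m, hm, rfl⟩
    refine ⟨fun i => Nat.casesOn i n m, fun i hi => ?_, by simp [Function.comp_def]⟩
    cases i with
    | zero => exact hn
    | succ i => exact hm i (by omega)

lemma isExpansionOf_append_iff {xb x y : List (Fin 2)} :
    IsExpansionOf xb (x ++ y) ↔
      ∃ xb₁ xb₂, xb = xb₁ ++ xb₂ ∧ IsExpansionOf xb₁ x ∧ IsExpansionOf xb₂ y := by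
  induction x generalizing xb with
  | nil => simp
  | cons c x ih =>
    simp only [List.cons_append, isExpansionOf_cons_iff, ih]
    constructor
    · rintro ⟨n, _, hn, rfl, xb₁, xb₂, rfl, h₁, h₂⟩
      exact ⟨_, xb₂, (List.append_assoc _ _ _).symm, ⟨n, xb₁, hn, rfl, h₁⟩, h₂⟩
    · rintro ⟨_, xb₂, rfl, ⟨n, xb₁, hn, rfl, h₁⟩, h₂⟩
      exact ⟨n, _, hn, List.append_assoc _ _ _, xb₁, xb₂, rfl, h₁, h₂⟩

lemma isExpansionOf_replicate_iff {xb : List (Fin 2)} {a : ℕ} (ha : 1 ≤ a) (c : Fin 2) :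
    IsExpansionOf xb (List.replicate a c) ↔ ∃ b, a ≤ b ∧ xb = List.replicate b c := by
  induction a, ha using Nat.le_induction generalizing xb with
  | base => simp [isExpansionOf_cons_iff]
  | succ a ha ih =>
    rw [List.replicate_succ, isExpansionOf_cons_iff]
    constructor
    · rintro ⟨n, _, hn, rfl, h⟩
      obtain ⟨b, hb, rfl⟩ := ih.1 h
      exact ⟨n + b, by omega, (List.replicate_add _ _ _).symm⟩
    · rintro ⟨b, hb, rfl⟩
      refine ⟨1, List.replicate (b - 1) c, le_rfl, ?_, ih.2 ⟨b - 1, by omega, rfl⟩⟩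
      rw [← List.replicate_add]
      congr 1
      omega

lemma isExpansionOf_ofRunLengths_iff {xb : List (Fin 2)} {w : List ℕ} (hw : 0 ∉ w) (c : Fin 2) :
    IsExpansionOf xb (ofRunLengths w c) ↔
      ∃ w', List.Forall₂ (· ≤ ·) w w' ∧ xb = ofRunLengths w' c := by
  induction w generalizing xb c with
  | nil => simp
  | cons a w ih =>
    simp only [List.mem_cons, not_or] at hw
    simp only [ofRunLengths_cons, isExpansionOf_append_iff,
      isExpansionOf_replicate_iff (Nat.one_le_iff_ne_zero.2 (Ne.symm hw.1)), ih hw.2,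
      List.forall₂_cons_left_iff]
    constructor
    · rintro ⟨_, _, rfl, ⟨b, hb, rfl⟩, w', hw', rfl⟩
      exact ⟨b :: w', ⟨b, w', hb, hw', rfl⟩, rfl⟩
    · rintro ⟨_, ⟨b, w', hb, hw', rfl⟩, rfl⟩
      exact ⟨_, _, rfl, ⟨b, hb, rfl⟩, w', hw', rfl⟩

lemma corrValue_append {a b a' b' : List (Fin 2)} (h : a.length = b.length) :
    corrValue (a ++ a') (b ++ b') = corrValue a b + corrValue a' b' := by
  simp [corrValue, List.zip_append h]

lemma corrValue_replicate_append (n : ℕ) (c d : Fin 2) (t t' : List (Fin 2)) :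
    corrValue (List.replicate n c ++ t) (List.replicate n d ++ t') =
      (if c = d then 0 else n) + corrValue t t' := by
  rw [corrValue_append (by simp)]
  congr 1
  induction n with
  | zero => simp [corrValue]
  | succ n ih =>
    simp only [corrValue, List.replicate_succ, List.zip_cons_cons, List.map_cons,
      List.sum_cons] at ih ⊢
    split_ifs at ih ⊢ <;> omega

lemma ofRunLengths_cons_add (a b : ℕ) (w : List ℕ) (c : Fin 2) :
    ofRunLengths ((a + b) :: w) c = List.replicate a c ++ ofRunLengths (b :: w) c := by
  rw [ofRunLengths_cons, ofRunLengths_cons, List.replicate_add, List.append_assoc]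

def NoTwoConsecutive (R : Finset ℕ) : Prop := ∀ i ∈ R, i + 1 ∉ R

namespace NoTwoConsecutive

variable {R S : Finset ℕ}

lemma mono (h : NoTwoConsecutive R) (hS : S ⊆ R) : NoTwoConsecutive S :=
  fun i hi hi' => h i (hS hi) (hS hi')

lemma map_addRight (h : NoTwoConsecutive S) (n : ℕ) :
    NoTwoConsecutive (S.map (addRightEmbedding n)) := by
  simp only [NoTwoConsecutive, Finset.mem_map, addRightEmbedding_apply, forall_exists_index,
    and_imp, forall_apply_eq_imp_iff₂, not_exists, not_and]
  intro i hi j hj hji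
  exact h i hi (by rwa [show j = i + 1 by omega] at hj)

lemma of_map_addRight {n : ℕ} (h : NoTwoConsecutive (S.map (addRightEmbedding n))) :
    NoTwoConsecutive S := by
  intro i hi hi'
  refine h (i + n) (Finset.mem_map_of_mem _ hi) ?_
  simpa [add_right_comm] using Finset.mem_map_of_mem (addRightEmbedding n) hi'

lemma insert_zero (h : NoTwoConsecutive R) (h1 : 1 ∉ R) : NoTwoConsecutive (insert 0 R) := by
  intro i hi hi'
  rw [Finset.mem_insert] at hi hi'
  rcases hi with rfl | hi
  · exact h1 (hi'.resolve_left one_ne_zero)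
  · exact h i hi (hi'.resolve_left (Nat.succ_ne_zero i))

/-- Distinct elements of a set without two consecutive elements lie in distinct blocks
`{a + 2j, a + 2j + 1}`. -/
lemma two_mul_card_le (h : NoTwoConsecutive R) {a b : ℕ} (hR : R ⊆ Finset.Ico a b) :
    2 * R.card ≤ b - a + 1 := by
  have hinj : Set.InjOn (fun i => (i - a) / 2) R := by
    intro i hi j hj hij
    have := Finset.mem_Ico.1 (hR hi)
    have := Finset.mem_Ico.1 (hR hj)
    have := h i hi
    have := h j hj
    simp only at hij
    rcases lt_trichotomy i j with hlt | rfl | hlt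
    · obtain rfl : j = i + 1 := by omega
      contradiction
    · rfl
    · obtain rfl : i = j + 1 := by omega
      contradiction
  have hmaps : Set.MapsTo (fun i => (i - a) / 2) R (Finset.range ((b - a + 1) / 2)) := by
    intro i hi
    have := Finset.mem_Ico.1 (hR hi)
    simp only [Finset.coe_range, Set.mem_Iio]
    omega
  have := Finset.card_le_card_of_injOn _ hmaps hinj
  rw [Finset.card_range] at this
  omega

end NoTwoConsecutive

lemma Finset.exists_eq_map_addRightEmbedding {R : Finset ℕ} {n : ℕ} (h : ∀ i ∈ R, n ≤ i) :
    ∃ S : Finset ℕ, R = S.map (addRightEmbedding n) := by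
  refine ⟨R.image (· - n), ?_⟩
  ext i
  simp only [Finset.mem_map, Finset.mem_image, addRightEmbedding_apply, exists_exists_and_eq_and]
  constructor
  · intro hi
    exact ⟨i, hi, Nat.sub_add_cancel (h i hi)⟩
  · rintro ⟨j, hj, rfl⟩
    rwa [Nat.sub_add_cancel (h j hj)]

lemma sum_map_addRightEmbedding_getD (S : Finset ℕ) (n : ℕ) (w : List ℕ) :
    ∑ i ∈ S.map (addRightEmbedding n), w.getD i 0 = ∑ i ∈ S, (w.drop n).getD i 0 := by
  rw [Finset.sum_map]
  refine Finset.sum_congr rfl fun i _ => ?_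
  simp [List.getD_eq_getElem?_getD, List.getElem?_drop, add_comm]

lemma Finset.map_addRightEmbedding_one_subset_Ico {R : Finset ℕ} {a b : ℕ}
    (h : R ⊆ Finset.Ico a (b - 1)) : R.map (addRightEmbedding 1) ⊆ Finset.Ico (a + 1) b := by
  intro i hi
  obtain ⟨j, hj, rfl⟩ := Finset.mem_map.1 hi
  have := Finset.mem_Ico.1 (h hj)
  rw [addRightEmbedding_apply, Finset.mem_Ico]
  omega

/-- The invariant of the lower-bound induction. The first run may be chosen only when the two
strings start with different characters. -/
def FlipLowerBound (w u : List ℕ) (c d : Fin 2) : Prop :=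
  ∃ R : Finset ℕ, R ⊆ Finset.Ico (if c = d then 1 else 0) (w.length - 1) ∧ NoTwoConsecutive R ∧
    w.length ≤ u.length + 2 * R.card ∧
    ∑ i ∈ R, w.getD i 0 ≤ corrValue (ofRunLengths w c) (ofRunLengths u d)

namespace FlipLowerBound

variable {w u : List ℕ} {c d : Fin 2}

lemma nil (c d : Fin 2) : FlipLowerBound [] [] c d :=
  ⟨∅, by simp, fun _ h => absurd h (Finset.notMem_empty _), by simp, by simp⟩

lemma cons_cons (a : ℕ) (h : FlipLowerBound w u (c + 1) (d + 1)) :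
    FlipLowerBound (a :: w) (a :: u) c d := by
  obtain ⟨R, hR, hsp, hcard, hsum⟩ := h
  refine ⟨R.map (addRightEmbedding 1), ?_, hsp.map_addRight 1, ?_, ?_⟩
  · refine (Finset.map_addRightEmbedding_one_subset_Ico hR).trans
      (Finset.Ico_subset_Ico ?_ (by simp))
    simp only [add_left_inj]
    split_ifs <;> omega
  · simp only [List.length_cons, Finset.card_map]
    omega
  · rw [sum_map_addRightEmbedding_getD, ofRunLengths_cons, ofRunLengths_cons,
      corrValue_replicate_append]
    exact le_add_left (by simpa using hsum)

lemma cons_left {a b : ℕ} (hw : w ≠ []) (hpar : c = d → w.length % 2 = u.length % 2)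
    (h : FlipLowerBound w (b :: u) (c + 1) d) : FlipLowerBound (a :: w) ((a + b) :: u) c d := by
  obtain ⟨R, hR, hsp, hcard, hsum⟩ := h
  have hw₀ : 0 < w.length := List.length_pos_iff.2 hw
  have hcost : corrValue (ofRunLengths (a :: w) c) (ofRunLengths ((a + b) :: u) d) =
      (if c = d then 0 else a) + corrValue (ofRunLengths w (c + 1)) (ofRunLengths (b :: u) d) := by
    rw [ofRunLengths_cons, ofRunLengths_cons_add, corrValue_replicate_append]
  simp only [List.length_cons] at hcard
  by_cases hcd : c = d
  · subst hcd
    simp only [add_eq_left, one_ne_zero, if_false] at hR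
    refine ⟨R.map (addRightEmbedding 1), ?_, hsp.map_addRight 1, ?_, ?_⟩
    · exact (Finset.map_addRightEmbedding_one_subset_Ico hR).trans
        (Finset.Ico_subset_Ico (by simp) (by simp))
    · have := hpar rfl
      simp only [List.length_cons, Finset.card_map]
      omega
    · rw [sum_map_addRightEmbedding_getD, hcost]
      simpa using hsum
  · -- The first run of `x` lies entirely against a run of `y` of the other character.
    rw [(Fin.two_add_one_eq_iff_ne c d).2 hcd, if_pos rfl] at hR
    have h0 : 0 ∉ R.map (addRightEmbedding 1) := by simp
    have h1 : 1 ∉ R.map (addRightEmbedding 1) := by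
      simpa using fun h => (Finset.mem_Ico.1 (hR h)).1.not_gt Nat.zero_lt_one
    refine ⟨insert 0 (R.map (addRightEmbedding 1)), ?_, (hsp.map_addRight 1).insert_zero h1, ?_, ?_⟩
    · rw [if_neg hcd]
      refine Finset.insert_subset (by simp [hw₀]) ?_
      exact (Finset.map_addRightEmbedding_one_subset_Ico hR).trans
        (Finset.Ico_subset_Ico (Nat.zero_le _) (by simp))
    · simp only [Finset.card_insert_of_notMem h0, Finset.card_map, List.length_cons]
      omega
    · rw [Finset.sum_insert h0, sum_map_addRightEmbedding_getD, hcost, if_neg hcd]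
      simpa using hsum

lemma cons_right {a b : ℕ} (hpar : c = d → w.length % 2 = u.length % 2)
    (h : FlipLowerBound (a :: w) u c (d + 1)) : FlipLowerBound ((b + a) :: w) (b :: u) c d := by
  obtain ⟨R, hR, hsp, hcard, hsum⟩ := h
  have hcost : corrValue (ofRunLengths ((b + a) :: w) c) (ofRunLengths (b :: u) d) =
      (if c = d then 0 else b) + corrValue (ofRunLengths (a :: w) c) (ofRunLengths u (d + 1)) := by
    rw [ofRunLengths_cons_add, ofRunLengths_cons b u d, corrValue_replicate_append]
  -- A first run chosen in `h` is no longer paid in full, so it is dropped.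
  have hsum_erase : ∑ i ∈ R.erase 0, ((b + a) :: w).getD i 0 ≤ ∑ i ∈ R, (a :: w).getD i 0 :=
    calc ∑ i ∈ R.erase 0, ((b + a) :: w).getD i 0 = ∑ i ∈ R.erase 0, (a :: w).getD i 0 := by
          refine Finset.sum_congr rfl fun i hi => ?_
          obtain ⟨j, rfl⟩ := Nat.exists_eq_succ_of_ne_zero (Finset.ne_of_mem_erase hi)
          rfl
      _ ≤ ∑ i ∈ R, (a :: w).getD i 0 := Finset.sum_le_sum_of_subset (Finset.erase_subset 0 R)
  have hcard_erase : R.card ≤ (R.erase 0).card + if c = d then 1 else 0 := by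
    split_ifs with hcd
    · exact Nat.le_add_of_sub_le Finset.pred_card_le_card_erase
    · have h0 : 0 ∉ R := by
        rw [if_pos ((Fin.two_add_one_eq_iff_ne d c).2 (Ne.symm hcd)).symm] at hR
        exact fun h => absurd (Finset.mem_Ico.1 (hR h)).1 (by omega)
      rw [Finset.erase_eq_of_notMem h0, add_zero]
  simp only [List.length_cons] at hR hcard
  refine ⟨R.erase 0, ?_, hsp.mono (Finset.erase_subset 0 R), ?_, ?_⟩
  · intro i hi
    have := Finset.mem_Ico.1 (hR (Finset.mem_of_mem_erase hi))
    have := Finset.ne_of_mem_erase hi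
    rw [Finset.mem_Ico, List.length_cons]
    split_ifs at * <;> omega
  · simp only [List.length_cons]
    split_ifs at hcard_erase with hcd
    · have := hpar hcd
      omega
    · omega
  · rw [hcost]
    omega

end FlipLowerBound

/-- The parity condition says that the two strings end with the same character. -/
theorem FlipLowerBound.of_sum_eq : ∀ (w u : List ℕ) (c d : Fin 2), 0 ∉ w → 0 ∉ u →
    w.sum = u.sum → (c = d ↔ w.length % 2 = u.length % 2) → FlipLowerBound w u c d
  | [], [], c, d, _, _, _, _ => .nil c d
  | [], b :: u, _, _, _, hu, hsum, _ | b :: u, [], _, _, hu, _, hsum, _ => by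
    simp only [List.mem_cons, not_or] at hu
    simp only [List.sum_nil, List.sum_cons] at hsum
    omega
  | a :: w, b :: u, c, d, hw, hu, hsum, hpar => by
    simp only [List.mem_cons, not_or] at hw hu
    simp only [List.sum_cons, List.length_cons] at hsum hpar
    have hpar' : c = d → w.length % 2 = u.length % 2 := fun h => by have := hpar.1 h; omega
    rcases lt_trichotomy a b with hab | rfl | hab
    · obtain ⟨k, rfl⟩ := Nat.exists_eq_add_of_lt hab
      have hw' : w ≠ [] := by
        rintro rfl
        simp at hsum
        omega
      refine (FlipLowerBound.of_sum_eq w ((k + 1) :: u) (c + 1) d hw.2 ?_ ?_ ?_).cons_left hw' hpar'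
      · simp [hu.2]
      · simp only [List.sum_cons]
        omega
      · rw [Fin.two_add_one_eq_iff_ne, Ne, hpar, List.length_cons]
        omega
    · refine (FlipLowerBound.of_sum_eq w u (c + 1) (d + 1) hw.2 hu.2 (by omega) ?_).cons_cons a
      rw [add_left_inj, hpar]
      omega
    · obtain ⟨k, rfl⟩ := Nat.exists_eq_add_of_lt hab
      refine (FlipLowerBound.of_sum_eq ((k + 1) :: w) u c (d + 1) ?_ hu.2 ?_ ?_).cons_right hpar'
      · simp [hw.2]
      · simp only [List.sum_cons]
        omega
      · rw [eq_comm, Fin.two_add_one_eq_iff_ne, Ne, eq_comm, hpar, List.length_cons]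
        omega
termination_by w u => w.length + u.length

def alignmentCosts (w u : List ℕ) (c d : Fin 2) : Set ℕ :=
  {v | ∃ w' u', List.Forall₂ (· ≤ ·) w w' ∧ List.Forall₂ (· ≤ ·) u u' ∧ w'.sum = u'.sum ∧
    corrValue (ofRunLengths w' c) (ofRunLengths u' d) = v}

lemma DTW_ofRunLengths {w u : List ℕ} (hw : 0 ∉ w) (hu : 0 ∉ u) (c d : Fin 2) :
    DTW (ofRunLengths w c) (ofRunLengths u d) = sInf (alignmentCosts w u c d) := by
  simp only [DTW, alignmentCosts, isExpansionOf_ofRunLengths_iff hw,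
    isExpansionOf_ofRunLengths_iff hu]
  congr 1
  ext v
  constructor
  · rintro ⟨_, _, ⟨w', hw', rfl⟩, ⟨u', hu', rfl⟩, hlen, rfl⟩
    exact ⟨w', u', hw', hu', by simpa using hlen, rfl⟩
  · rintro ⟨w', u', hw', hu', hsum, rfl⟩
    exact ⟨_, _, ⟨w', hw', rfl⟩, ⟨u', hu', rfl⟩, by simpa using hsum, rfl⟩

namespace alignmentCosts

variable {w u : List ℕ} {c : Fin 2} {v : ℕ}

lemma zero_mem_nil (c : Fin 2) : 0 ∈ alignmentCosts [] [] c c :=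
  ⟨[], [], .nil, .nil, rfl, rfl⟩

lemma mem_cons_cons (a b : ℕ) (h : v ∈ alignmentCosts w u (c + 1) (c + 1)) :
    v ∈ alignmentCosts (a :: w) (b :: u) c c := by
  obtain ⟨w', u', hw, hu, hsum, rfl⟩ := h
  refine ⟨max a b :: w', max a b :: u', .cons (le_max_left a b) hw,
    .cons (le_max_right a b) hu, by simp [hsum], ?_⟩
  rw [ofRunLengths_cons, ofRunLengths_cons, corrValue_replicate_append, if_pos rfl, zero_add]

/-- Flipping the second run of `x` merges its first three runs, all matched with the first run
of `y`; only the flipped run is paid for. -/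
lemma add_mem_cons_cons_cons (a a₁ b : ℕ) (h : v ∈ alignmentCosts w (b :: u) c c) :
    a₁ + v ∈ alignmentCosts (a :: a₁ :: w) (b :: u) c c := by
  obtain ⟨w', _, hw, hbu, hsum, rfl⟩ := h
  obtain ⟨n, u', hbn, hu, rfl⟩ := List.forall₂_cons_left_iff.1 hbu
  refine ⟨a :: a₁ :: w', (a + (a₁ + n)) :: u', .cons le_rfl (.cons le_rfl hw),
    .cons (by omega) hu, ?_, ?_⟩
  · simp only [List.sum_cons] at hsum ⊢
    omega
  · rw [ofRunLengths_cons_add, ofRunLengths_cons_add, ofRunLengths_cons, ofRunLengths_cons,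
      corrValue_replicate_append, corrValue_replicate_append, Fin.two_add_one_add_one,
      if_neg (Fin.two_add_one_ne c), if_pos rfl, zero_add]

end alignmentCosts

lemma NoTwoConsecutive.exists_shift_of_one_notMem {R : Finset ℕ} {m : ℕ} (hsp : NoTwoConsecutive R)
    (hR : R ⊆ Finset.Ico 1 m) (h1 : 1 ∉ R) :
    ∃ S : Finset ℕ, S ⊆ Finset.Ico 1 (m - 1) ∧ NoTwoConsecutive S ∧ S.card = R.card ∧
      ∀ f : ℕ → ℕ, ∑ i ∈ R, f i = ∑ i ∈ S, f (i + 1) := by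
  obtain ⟨S, rfl⟩ := Finset.exists_eq_map_addRightEmbedding (n := 1) (R := R)
    fun i hi => (Finset.mem_Ico.1 (hR hi)).1
  refine ⟨S, fun i hi => ?_, hsp.of_map_addRight, Finset.card_map _ |>.symm,
    fun f => Finset.sum_map _ _ _⟩
  have hiR := Finset.mem_Ico.1 (hR (Finset.mem_map_of_mem (addRightEmbedding 1) hi))
  have hi0 : i ≠ 0 := by
    rintro rfl
    exact h1 (Finset.mem_map_of_mem (addRightEmbedding 1) hi)
  rw [addRightEmbedding_apply] at hiR
  rw [Finset.mem_Ico]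
  omega

lemma NoTwoConsecutive.exists_shift_of_one_mem {R : Finset ℕ} {m : ℕ} (hsp : NoTwoConsecutive R)
    (hR : R ⊆ Finset.Ico 1 m) (h1 : 1 ∈ R) :
    ∃ S : Finset ℕ, S ⊆ Finset.Ico 1 (m - 2) ∧ NoTwoConsecutive S ∧ S.card + 1 = R.card ∧
      ∀ f : ℕ → ℕ, ∑ i ∈ R, f i = f 1 + ∑ i ∈ S, f (i + 2) := by
  have h2 : 2 ∉ R := hsp 1 h1
  obtain ⟨S, hS⟩ := Finset.exists_eq_map_addRightEmbedding (n := 2) (R := R.erase 1)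
    fun i hi => by
      have := Finset.mem_Ico.1 (hR (Finset.mem_of_mem_erase hi))
      have := Finset.ne_of_mem_erase hi
      omega
  have hSR : ∀ i ∈ S, i + 2 ∈ R ∧ i + 2 ≠ 1 := fun i hi =>
    (Finset.mem_erase.1 (hS ▸ Finset.mem_map_of_mem (addRightEmbedding 2) hi)).symm
  refine ⟨S, fun i hi => ?_, (hS ▸ hsp.mono (Finset.erase_subset 1 R)).of_map_addRight,
    ?_, fun f => ?_⟩
  · have hiR := Finset.mem_Ico.1 (hR (hSR i hi).1)
    have hi2 : i + 2 ≠ 2 := fun h => h2 (h ▸ (hSR i hi).1)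
    rw [Finset.mem_Ico]
    omega
  · rw [← Finset.card_map (addRightEmbedding 2), ← hS, Finset.card_erase_add_one h1]
  · rw [← Finset.add_sum_erase R f h1, hS, Finset.sum_map]
    rfl

theorem sum_mem_alignmentCosts : ∀ (w u : List ℕ) (c : Fin 2) (R : Finset ℕ),
    R ⊆ Finset.Ico 1 (w.length - 1) → NoTwoConsecutive R → 2 * R.card + u.length = w.length →
    ∑ i ∈ R, w.getD i 0 ∈ alignmentCosts w u c c
  | [], u, c, R, hR, _, hcard => by
    obtain rfl : R = ∅ := Finset.subset_empty.1 (by simpa using hR)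
    obtain rfl : u = [] := List.eq_nil_of_length_eq_zero (by simpa using hcard)
    exact alignmentCosts.zero_mem_nil c
  | a :: w, u, c, R, hR, hsp, hcard => by
    obtain ⟨b, u, rfl⟩ : ∃ b u', u = b :: u' := by
      have := hsp.two_mul_card_le hR
      match u with
      | [] => simp at hcard this; omega
      | b :: u => exact ⟨b, u, rfl⟩
    simp only [List.length_cons, Nat.add_sub_cancel] at hR hcard
    by_cases h1 : 1 ∈ R
    · obtain ⟨a₁, w, rfl⟩ : ∃ a₁ w', w = a₁ :: w' := by
        match w with
        | [] => simp [Finset.subset_empty.1 (by simpa using hR)] at h1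
        | a₁ :: w => exact ⟨a₁, w, rfl⟩
      obtain ⟨S, hS, hspS, hcardS, hsum⟩ := hsp.exists_shift_of_one_mem hR h1
      rw [hsum]
      exact alignmentCosts.add_mem_cons_cons_cons a a₁ b (sum_mem_alignmentCosts w (b :: u) c S
        (by simpa using hS) hspS (by simp only [List.length_cons] at hcard ⊢; omega))
    · obtain ⟨S, hS, hspS, hcardS, hsum⟩ := hsp.exists_shift_of_one_notMem hR h1
      rw [hsum]
      exact alignmentCosts.mem_cons_cons a b
        (sum_mem_alignmentCosts w u (c + 1) S hS hspS (by omega))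
termination_by w => w.length

lemma exists_ofRunLengths_of_head?_of_getLast? {x : List (Fin 2)} {c : Fin 2}
    (h₀ : x.head? = some c) (h₁ : x.getLast? = some c) :
    ∃ w : List ℕ, 0 ∉ w ∧ w.length % 2 = 1 ∧ x = ofRunLengths w c := by
  obtain ⟨x, rfl⟩ : ∃ x', x = c :: x' := by
    match x, h₀ with
    | _ :: x', h => exact ⟨x', by simpa using h⟩
  obtain ⟨w, hw, hx⟩ := exists_ofRunLengths_cons c x
  have hne : w ≠ [] := by
    rintro rfl
    simp at hx
  rw [hx, getLast?_ofRunLengths hw hne] at h₁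
  refine ⟨w, hw, ?_, hx⟩
  by_contra hodd
  simp [hodd] at h₁

lemma List.Forall₂.getD_le {w w' : List ℕ} (h : List.Forall₂ (· ≤ ·) w w') (i : ℕ) :
    w.getD i 0 ≤ w'.getD i 0 := by
  induction h generalizing i with
  | nil => simp
  | cons hab _ ih =>
    cases i with
    | zero => simpa using hab
    | succ i => simpa using ih i

lemma List.Forall₂.zero_notMem {w w' : List ℕ} (h : List.Forall₂ (· ≤ ·) w w') (hw : 0 ∉ w) :
    0 ∉ w' := by
  induction h with
  | nil => simp
  | cons hab _ ih =>
    simp only [List.mem_cons, not_or] at hw ⊢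
    exact ⟨by omega, ih hw.2⟩

/-- Runs are indexed from `0` here, from `1` in the theorem. -/
def interiorFlipCosts (w : List ℕ) (t : ℕ) : Set ℕ :=
  {v | ∃ R : Finset ℕ, R ⊆ Finset.Ico 1 (w.length - 1) ∧ NoTwoConsecutive R ∧ R.card = t ∧
    ∑ i ∈ R, w.getD i 0 = v}

lemma setOf_eq_interiorFlipCosts (w : List ℕ) (t : ℕ) :
    {v : ℕ | ∃ R : Finset ℕ, R ⊆ Finset.Icc 2 (w.length - 1) ∧ (∀ i ∈ R, i + 1 ∉ R) ∧
      R.card = t ∧ ∑ i ∈ R, w.getD (i - 1) 0 = v} = interiorFlipCosts w t := by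
  ext v
  constructor
  · rintro ⟨R, hR, hsp, rfl, rfl⟩
    obtain ⟨S, hS, hspS, hcard, hsum⟩ := NoTwoConsecutive.exists_shift_of_one_notMem hsp
      (m := w.length) (fun i hi => by have := Finset.mem_Icc.1 (hR hi); simp; omega)
      (fun h => by simpa using hR h)
    exact ⟨S, hS, hspS, hcard, by simp [hsum]⟩
  · rintro ⟨S, hS, hsp, rfl, rfl⟩
    refine ⟨S.map (addRightEmbedding 1), fun i hi => ?_, hsp.map_addRight 1, Finset.card_map _, ?_⟩
    · obtain ⟨j, hj, rfl⟩ := Finset.mem_map.1 hi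
      have := Finset.mem_Ico.1 (hS hj)
      rw [addRightEmbedding_apply, Finset.mem_Icc]
      omega
    · simp [Finset.sum_map]

lemma exists_mem_interiorFlipCosts_le {w u : List ℕ} (hw : 0 ∉ w) (hu : 0 ∉ u)
    (hpar : w.length % 2 = u.length % 2) {c : Fin 2} {v : ℕ} (hv : v ∈ alignmentCosts w u c c) :
    ∃ s ∈ interiorFlipCosts w ((w.length - u.length) / 2), s ≤ v := by
  obtain ⟨w', u', hww', huu', hsum, rfl⟩ := hv
  have hlw := hww'.length_eq
  have hlu := huu'.length_eq
  obtain ⟨R, hR, hsp, hcard, hRv⟩ := FlipLowerBound.of_sum_eq w' u' c c (hww'.zero_notMem hw)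
    (huu'.zero_notMem hu) hsum (by simp [← hlw, ← hlu, hpar])
  rw [if_pos rfl] at hR
  obtain ⟨S, hSR, hS⟩ := Finset.exists_subset_card_eq (s := R) (n := (w.length - u.length) / 2)
    (by omega)
  refine ⟨_, ⟨S, hSR.trans (by rwa [hlw]), hsp.mono hSR, hS, rfl⟩, ?_⟩
  calc ∑ i ∈ S, w.getD i 0 ≤ ∑ i ∈ S, w'.getD i 0 := Finset.sum_le_sum fun i _ => hww'.getD_le i
    _ ≤ ∑ i ∈ R, w'.getD i 0 := Finset.sum_le_sum_of_subset hSR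
    _ ≤ _ := hRv

lemma exists_mem_alignmentCosts_le {w u : List ℕ} (hle : u.length ≤ w.length)
    (hpar : w.length % 2 = u.length % 2) {s : ℕ}
    (hs : s ∈ interiorFlipCosts w ((w.length - u.length) / 2)) (c : Fin 2) :
    ∃ v ∈ alignmentCosts w u c c, v ≤ s := by
  obtain ⟨R, hR, hsp, hcard, rfl⟩ := hs
  exact ⟨_, sum_mem_alignmentCosts w u c R hR hsp (by omega), le_rfl⟩

/-- Let `x` and `y` be binary strings that each begin and end with the character `0`,
with `k` and `ℓ` runs respectively, `k ≥ ℓ`, and run lengths `w_1, …, w_k` of `x` in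
order. Then `DTW(x, y)` equals the minimum, over all subsets `R ⊆ {2, 3, …, k−1}`
with `|R| = (k − ℓ)/2` containing no two consecutive integers, of `∑_{i ∈ R} w_i`. -/
theorem stmt_12 (x y : List (Fin 2))
    (hx0 : x.head? = some 0) (hx1 : x.getLast? = some 0)
    (hy0 : y.head? = some 0) (hy1 : y.getLast? = some 0)
    (hkl : numRuns y ≤ numRuns x) :
    DTW x y = sInf {v : ℕ | ∃ R : Finset ℕ,
      R ⊆ Finset.Icc 2 (numRuns x - 1) ∧ (∀ i ∈ R, i + 1 ∉ R) ∧
      R.card = (numRuns x - numRuns y) / 2 ∧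
      ∑ i ∈ R, (runLengths x).getD (i - 1) 0 = v} := by
  obtain ⟨w, hw, hw_odd, rfl⟩ := exists_ofRunLengths_of_head?_of_getLast? hx0 hx1
  obtain ⟨u, hu, hu_odd, rfl⟩ := exists_ofRunLengths_of_head?_of_getLast? hy0 hy1
  rw [numRuns_ofRunLengths hw, numRuns_ofRunLengths hu] at hkl ⊢
  rw [runLengths_ofRunLengths hw, setOf_eq_interiorFlipCosts, DTW_ofRunLengths hw hu]
  exact csInf_eq_csInf_of_forall_exists_le
    (fun v hv => exists_mem_interiorFlipCosts_le hw hu (by omega) hv)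
    (fun s hs => exists_mem_alignmentCosts_le hkl (by omega) hs 0)
end
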